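/- arXiv:2011.05942 — 4 statements merged into one kernel-verified Lean document; each statement's English description precedes it below -/
import Mathlib

section
/- Let n ≥ 2 and d ≥ 1, and let ρ, σ be arbitrary d×d complex matrices. Then Tr[(σ ⊗ Id^{⊗(n-1)}) · S_n · (ρ ⊗ ρ ⊗ ⋯ ⊗ ρ)] = Tr[ρ^n σ], where ρ appears n times in the tensor product. -/
open Matrix BigOperators

/-- The `n`-fold tensor (Kronecker) product of `d × d` matrices, one per register. -/
noncomputable def tensPow {d n : ℕ} (A : Fin n → Matrix (Fin d) (Fin d) ℂ) :
    Matrix (Fin n → Fin d) (Fin n → Fin d) ℂ :=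
  Matrix.of fun i j => ∏ μ, A μ (i μ) (j μ)

/-- The cyclic shift operator `S_n` on `(ℂ^d)^{⊗ n}`, determined by
`S_n (v_1 ⊗ v_2 ⊗ ⋯ ⊗ v_n) = v_n ⊗ v_1 ⊗ ⋯ ⊗ v_{n-1}`. -/
noncomputable def cyclicShift (d n : ℕ) [NeZero n] :
    Matrix (Fin n → Fin d) (Fin n → Fin d) ℂ :=
  Matrix.of fun i j => if ∀ μ, i μ = j (μ - 1) then 1 else 0

/-!
Cycling the trace brings `ρ^{⊗n}` in front of `σ ⊗ Id^{⊗(n-1)}`, and the two multiply factorwise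
to `ρσ ⊗ ρ^{⊗(n-1)}`. Against the shift, the trace of a tensor product `⊗_μ C_μ` is a sum over
closed paths `x` of `∏_μ C_μ (x μ) (x (μ - 1))`, which is the trace of the ordered product
`C_{n-1} ⋯ C_1 C_0 = ρ^{n-1} (ρσ)`.
-/

theorem Fintype.sum_pi_fin_succ {α β : Type*} [Fintype α] [AddCommMonoid β] {m : ℕ}
    (f : (Fin (m + 1) → α) → β) :
    ∑ y, f y = ∑ a, ∑ y : Fin m → α, f (Fin.cons a y) := by
  rw [← (Fin.consEquiv fun _ => α).sum_comp f, Fintype.sum_prod_type]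
  rfl

section PathSum

variable {ι R : Type*} [Fintype ι] [DecidableEq ι] [CommSemiring R]

theorem Matrix.mul_pow_apply_eq_sum_prod (D C : Matrix ι ι R) (m : ℕ) (a b : ι) :
    (D * C ^ m) a b = ∑ y : Fin m → ι,
      D a ((Fin.cons b y : Fin (m + 1) → ι) (Fin.last m)) *
        ∏ t : Fin m, C ((Fin.cons b y : Fin (m + 1) → ι) t.succ)
          ((Fin.cons b y : Fin (m + 1) → ι) t.castSucc) := by
  induction m generalizing b with
  | zero => simp
  | succ m ih =>
    rw [pow_succ, ← Matrix.mul_assoc, Matrix.mul_apply, Fintype.sum_pi_fin_succ]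
    refine Finset.sum_congr rfl fun c _ => ?_
    rw [ih, Finset.sum_mul]
    refine Finset.sum_congr rfl fun y _ => ?_
    rw [Fin.prod_univ_succ, ← Fin.succ_last]
    simp only [Fin.cons_succ, ← Fin.succ_castSucc, Fin.castSucc_zero, Fin.cons_zero,
      Fin.succ_zero_eq_one, Fin.cons_one]
    ring

theorem Matrix.trace_mul_pow_eq_sum_prod (D C : Matrix ι ι R) (m : ℕ) :
    (D * C ^ m).trace = ∑ y : Fin (m + 1) → ι,
      D (y 0) (y (Fin.last m)) * ∏ t : Fin m, C (y t.succ) (y t.castSucc) := by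
  rw [Fintype.sum_pi_fin_succ]
  simp only [Matrix.trace, Matrix.diag, Matrix.mul_pow_apply_eq_sum_prod, Fin.cons_zero]

end PathSum

theorem tensPow_mul_tensPow {d n : ℕ} (A B : Fin n → Matrix (Fin d) (Fin d) ℂ) :
    tensPow A * tensPow B = tensPow fun μ => A μ * B μ := by
  ext i j
  simp only [tensPow, Matrix.mul_apply, Matrix.of_apply, Fintype.prod_sum,
    Finset.prod_mul_distrib]

theorem mul_cyclicShift_apply {κ : Type*} {d n : ℕ} [NeZero n]
    (M : Matrix κ (Fin n → Fin d) ℂ) (i : κ) (j : Fin n → Fin d) :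
    (M * cyclicShift d n) i j = M i fun μ => j (μ - 1) := by
  simp [Matrix.mul_apply, cyclicShift, ← funext_iff]

theorem trace_tensPow_mul_cyclicShift {d n : ℕ} [NeZero n]
    (A : Fin n → Matrix (Fin d) (Fin d) ℂ) :
    (tensPow A * cyclicShift d n).trace = ∑ x : Fin n → Fin d, ∏ μ, A μ (x μ) (x (μ - 1)) := by
  simp [Matrix.trace, mul_cyclicShift_apply, tensPow]

theorem trace_shift_tensPow_eq_general {n d : ℕ} [NeZero n]
    (ρ σ : Matrix (Fin d) (Fin d) ℂ) :
    (tensPow (fun μ : Fin n => if (μ : ℕ) = 0 then σ else 1) * cyclicShift d n *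
        tensPow (fun _ : Fin n => ρ)).trace
      = (ρ ^ n * σ).trace := by
  obtain ⟨m, rfl⟩ := Nat.exists_eq_succ_of_ne_zero (NeZero.ne n)
  rw [Matrix.trace_mul_cycle, tensPow_mul_tensPow, trace_tensPow_mul_cyclicShift,
    pow_succ, Matrix.mul_assoc, ← Matrix.trace_mul_comm (ρ * σ), Matrix.trace_mul_pow_eq_sum_prod]
  refine Finset.sum_congr rfl fun x _ => ?_
  have zero_sub_one : (0 : Fin (m + 1)) - 1 = Fin.last m := Fin.ext (by simp)
  have succ_sub_one (t : Fin m) : t.succ - 1 = t.castSucc := by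
    rw [← Fin.coeSucc_eq_succ, add_sub_cancel_right]
  simp [Fin.prod_univ_succ, zero_sub_one, succ_sub_one]

/-- For `n ≥ 2`, `d ≥ 1` and arbitrary `d × d` complex matrices `ρ, σ`,
`Tr[(σ ⊗ Id^{⊗(n-1)}) ⬝ S_n ⬝ ρ^{⊗ n}] = Tr[ρ^n σ]`. -/
theorem trace_shift_tensPow_eq {n d : ℕ} [NeZero n] (hn : 2 ≤ n) (hd : 1 ≤ d)
    (ρ σ : Matrix (Fin d) (Fin d) ℂ) :
    (tensPow (fun μ : Fin n => if (μ : ℕ) = 0 then σ else 1) * cyclicShift d n *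
        tensPow (fun _ : Fin n => ρ)).trace
      = (ρ ^ n * σ).trace :=
  trace_shift_tensPow_eq_general ρ σ
end

section
/- Let n ≥ 2, let ρ be a Hermitian positive-semidefinite d×d complex matrix with Tr[ρ] = 1, and let σ be a Hermitian unitary d×d complex matrix. Set V = (σ ⊗ Id^{⊗(n-1)}) · S_n acting on (ℂ^d)^{⊗n}, let H denote the 2×2 Hadamard matrix, P_0 = |0⟩⟨0| the projector onto the first basis vector of ℂ², and U = (H ⊗ Id)(P_0 ⊗ Id + (Id₂ − P_0) ⊗ V)(H ⊗ Id). Then Tr[(P_0 ⊗ Id) · U · (P_0 ⊗ ρ^{⊗n}) · U†] = 1/2 + (1/2)·Tr[ρ^n σ]; in particular the probability of measuring the ancilla in state 0 equals (1 + Tr[ρ^n σ])/2. -/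
open Matrix Kronecker BigOperators ComplexOrder

variable {d n : ℕ}

lemma tensPow_mul (A B : Fin n → Matrix (Fin d) (Fin d) ℂ) :
    tensPow A * tensPow B = tensPow (fun μ => A μ * B μ) := by
  ext i j
  simp only [tensPow, Matrix.mul_apply, Matrix.of_apply]
  conv_rhs => rw [Finset.prod_univ_sum]
  simp [Fintype.piFinset_univ, Finset.prod_mul_distrib]

lemma tensPow_one : tensPow (fun _ : Fin n => (1 : Matrix (Fin d) (Fin d) ℂ)) = 1 := by
  ext i j
  simp only [tensPow, Matrix.of_apply, Matrix.one_apply]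
  by_cases h : i = j
  · subst h; simp
  · rw [if_neg h]
    obtain ⟨μ, hμ⟩ := Function.ne_iff.mp h
    exact Finset.prod_eq_zero (Finset.mem_univ μ) (by simp [hμ])

lemma tensPow_conjTranspose (A : Fin n → Matrix (Fin d) (Fin d) ℂ) :
    (tensPow A)ᴴ = tensPow (fun μ => (A μ)ᴴ) := by
  ext i j
  simp [tensPow, Matrix.conjTranspose_apply]

lemma tensPow_trace (A : Fin n → Matrix (Fin d) (Fin d) ℂ) :
    (tensPow A).trace = ∏ μ, (A μ).trace := by
  simp only [Matrix.trace, Matrix.diag, tensPow, Matrix.of_apply]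
  conv_rhs => simp only [Matrix.trace, Matrix.diag]
  rw [Finset.prod_univ_sum]
  simp [Fintype.piFinset_univ]

lemma mul_cyclicShift [NeZero n] (M : Matrix (Fin n → Fin d) (Fin n → Fin d) ℂ) :
    M * cyclicShift d n = Matrix.of fun i j => M i (fun μ => j (μ - 1)) := by
  ext i j
  simp only [Matrix.mul_apply, cyclicShift, Matrix.of_apply]
  have h : ∀ k : Fin n → Fin d, (∀ μ, k μ = j (μ - 1)) ↔ k = fun μ => j (μ - 1) :=
    fun k => funext_iff.symm
  simp [h]

lemma cyclicShift_mul [NeZero n] (M : Matrix (Fin n → Fin d) (Fin n → Fin d) ℂ) :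
    cyclicShift d n * M = Matrix.of fun i j => M (fun μ => i (μ + 1)) j := by
  ext i j
  simp only [Matrix.mul_apply, cyclicShift, Matrix.of_apply]
  have h : ∀ k : Fin n → Fin d, (∀ μ, i μ = k (μ - 1)) ↔ k = fun μ => i (μ + 1) := by
    intro k
    constructor
    · intro h'
      funext ν
      have := h' (ν + 1)
      rwa [add_sub_cancel_right, eq_comm] at this
    · rintro rfl μ
      simp [sub_add_cancel]
  simp [h]

lemma cyclicShift_unitary [NeZero n] :
    (cyclicShift d n)ᴴ * cyclicShift d n = (1 : Matrix (Fin n → Fin d) (Fin n → Fin d) ℂ) := by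
  ext i j
  simp only [Matrix.mul_apply, Matrix.conjTranspose_apply, cyclicShift, Matrix.of_apply,
    Matrix.one_apply]
  have h : ∀ (x k : Fin n → Fin d), (∀ μ, k μ = x (μ - 1)) ↔ k = fun μ => x (μ - 1) :=
    fun _ _ => funext_iff.symm
  simp only [h, apply_ite star, star_one, star_zero]
  have hinj : ((fun μ => i (μ - 1)) = fun μ : Fin n => j (μ - 1)) ↔ i = j := by
    constructor
    · intro h'
      funext ν
      have := congrFun h' (ν + 1)
      rwa [add_sub_cancel_right] at this
    · rintro rfl; rfl
  simp [Finset.sum_ite_eq', eq_comm, hinj]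
variable {d : ℕ}

lemma sum_pi_succ {M : Type*} [AddCommMonoid M] {k : ℕ}
    (f : (Fin (k + 1) → Fin d) → M) :
    ∑ t, f t = ∑ c : Fin d, ∑ s : Fin k → Fin d, f (Fin.cons c s) := by
  rw [← (Fin.consEquiv (fun _ => Fin d)).sum_comp f, Fintype.sum_prod_type]
  rfl

lemma chain_sum (ρ : Matrix (Fin d) (Fin d) ℂ) (m : ℕ) :
    ∀ (a : Fin d) (g : Fin d → ℂ),
      (∑ t : Fin (m + 1) → Fin d,
          (∏ ν : Fin (m + 1), ρ (t ν) (Fin.cons (α := fun _ => Fin d) a t ν.castSucc)) * g (t (Fin.last m)))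
        = ∑ z, (ρ ^ (m + 1)) z a * g z := by
  induction m with
  | zero =>
    intro a g
    rw [sum_pi_succ]
    simp [Fin.prod_univ_succ]
  | succ m ih =>
    intro a g
    have hsplit : ∀ t : Fin (m + 2) → Fin d,
        (∏ ν : Fin (m + 2), ρ (t ν) (Fin.cons (α := fun _ => Fin d) a t ν.castSucc))
          = ρ (t 0) a * ∏ κ : Fin (m + 1), ρ (t κ.succ) (t κ.castSucc) := by
      intro t
      rw [Fin.prod_univ_succ]
      rw [Fin.castSucc_zero, Fin.cons_zero]
      refine congrArg (ρ (t 0) a * ·) ?_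
      exact Finset.prod_congr rfl fun κ _ => by rw [← Fin.succ_castSucc, Fin.cons_succ]
    simp only [hsplit]
    rw [sum_pi_succ]
    have hlast : ∀ (c : Fin d) (s : Fin (m + 1) → Fin d),
        Fin.cons (α := fun _ => Fin d) c s (Fin.last (m + 1)) = s (Fin.last m) := fun c s => by
      rw [← Fin.succ_last, Fin.cons_succ]
    simp only [Fin.cons_zero, Fin.cons_succ, hlast]
    have hins : ∀ c : Fin d,
        (∑ s : Fin (m + 1) → Fin d,
            ρ c a * (∏ κ : Fin (m + 1), ρ (s κ) (Fin.cons (α := fun _ => Fin d) c s κ.castSucc)) * g (s (Fin.last m)))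
          = ρ c a * ∑ z, (ρ ^ (m + 1)) z c * g z := by
      intro c
      rw [← ih c g, Finset.mul_sum]
      exact Finset.sum_congr rfl fun s _ => by ring
    simp only [hins]
    simp only [Finset.mul_sum]
    rw [Finset.sum_comm]
    refine Finset.sum_congr rfl fun z _ => ?_
    conv_rhs => rw [pow_succ, Matrix.mul_apply, Finset.sum_mul]
    exact Finset.sum_congr rfl fun c _ => by ring

lemma cyc_trace {d : ℕ} (m : ℕ) (ρ B : Matrix (Fin d) (Fin d) ℂ) :
    (tensPow (fun μ : Fin (m + 2) => if (μ : ℕ) = 0 then B else ρ) *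
        cyclicShift d (m + 2)).trace
      = (ρ ^ (m + 1) * B).trace := by
  rw [mul_cyclicShift]
  simp only [Matrix.trace, Matrix.diag, Matrix.of_apply, tensPow]
  have h0 : ((0 : Fin (m + 2)) - 1) = Fin.last (m + 1) :=
    sub_eq_of_eq_add (Fin.last_add_one _).symm
  have hsucc : ∀ κ : Fin (m + 1), (κ.succ : Fin (m + 2)) - 1 = κ.castSucc := by
    intro κ
    refine sub_eq_of_eq_add (Fin.ext ?_).symm
    have hlt : ((κ : ℕ) + 1) % (m + 2) = (κ : ℕ) + 1 := Nat.mod_eq_of_lt (by omega)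
    simp [Fin.add_def, hlt]
  have hsplit : ∀ i : Fin (m + 2) → Fin d,
      (∏ μ : Fin (m + 2), (if (μ : ℕ) = 0 then B else ρ) (i μ) (i (μ - 1)))
        = B (i 0) (i (Fin.last (m + 1))) * ∏ κ : Fin (m + 1), ρ (i κ.succ) (i κ.castSucc) := by
    intro i
    rw [Fin.prod_univ_succ, h0]
    simp only [Fin.val_zero, if_pos rfl]
    refine congrArg (B (i 0) (i (Fin.last (m + 1))) * ·) ?_
    refine Finset.prod_congr rfl fun κ _ => ?_
    rw [hsucc]
    simp [Fin.val_succ]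
  simp only [hsplit]
  rw [sum_pi_succ]
  have hlast : ∀ (a : Fin d) (t : Fin (m + 1) → Fin d),
      Fin.cons (α := fun _ => Fin d) a t (Fin.last (m + 1)) = t (Fin.last m) := fun a t => by
    rw [← Fin.succ_last, Fin.cons_succ]
  simp only [Fin.cons_zero, Fin.cons_succ, hlast]
  have hin : ∀ a : Fin d,
      (∑ t : Fin (m + 1) → Fin d,
          B a (t (Fin.last m)) *
            ∏ κ : Fin (m + 1), ρ (t κ) (Fin.cons (α := fun _ => Fin d) a t κ.castSucc))
        = ∑ z, (ρ ^ (m + 1)) z a * B a z := by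
    intro a
    rw [← chain_sum ρ m a (fun z => B a z)]
    exact Finset.sum_congr rfl fun t _ => mul_comm _ _
  simp only [hin]
  rw [Finset.sum_comm]
  exact Finset.sum_congr rfl fun z _ => (Matrix.mul_apply).symm

lemma cyclicShift_comm [NeZero n] (ρ : Matrix (Fin d) (Fin d) ℂ) :
    cyclicShift d n * tensPow (fun _ : Fin n => ρ)
      = tensPow (fun _ : Fin n => ρ) * cyclicShift d n := by
  rw [cyclicShift_mul, mul_cyclicShift]
  ext i j
  simp only [Matrix.of_apply, tensPow]
  calc (∏ μ : Fin n, ρ (i (μ + 1)) (j μ))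
      = ∏ μ : Fin n, (fun ν => ρ (i ν) (j (ν - 1))) (Equiv.addRight (1 : Fin n) μ) := by
        refine Finset.prod_congr rfl fun μ _ => ?_
        simp [add_sub_cancel_right]
    _ = ∏ ν : Fin n, ρ (i ν) (j (ν - 1)) :=
        Equiv.prod_comp (Equiv.addRight (1 : Fin n)) (fun ν => ρ (i ν) (j (ν - 1)))

noncomputable def Hmat : Matrix (Fin 2) (Fin 2) ℂ := (Real.sqrt 2 : ℂ)⁻¹ • !![1, 1; 1, -1]
noncomputable def P0mat : Matrix (Fin 2) (Fin 2) ℂ := !![1, 0; 0, 0]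

lemma kron_conjT {N : Type*} [Fintype N] (A : Matrix (Fin 2) (Fin 2) ℂ) (B : Matrix N N ℂ) :
    (A ⊗ₖ B)ᴴ = Aᴴ ⊗ₖ Bᴴ := by
  ext i j
  simp [Matrix.conjTranspose_apply, Matrix.kroneckerMap_apply, star_mul']

lemma core {N : Type*} [Fintype N] [DecidableEq N] (V R : Matrix N N ℂ) (t : ℂ)
    (h1 : R.trace = 1) (h2 : (V * R).trace = t) (h3 : (R * Vᴴ).trace = t)
    (h4 : (V * R * Vᴴ).trace = 1) :
    ((P0mat ⊗ₖ (1 : Matrix N N ℂ)) *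
        ((Hmat ⊗ₖ (1 : Matrix N N ℂ)) *
          (P0mat ⊗ₖ (1 : Matrix N N ℂ) + ((1 : Matrix (Fin 2) (Fin 2) ℂ) - P0mat) ⊗ₖ V) *
          (Hmat ⊗ₖ (1 : Matrix N N ℂ))) *
        (P0mat ⊗ₖ R) *
        ((Hmat ⊗ₖ (1 : Matrix N N ℂ)) *
          (P0mat ⊗ₖ (1 : Matrix N N ℂ) + ((1 : Matrix (Fin 2) (Fin 2) ℂ) - P0mat) ⊗ₖ V) *
          (Hmat ⊗ₖ (1 : Matrix N N ℂ)))ᴴ).trace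
      = 1 / 2 + 1 / 2 * t := by
  have hc : ((Real.sqrt 2 : ℂ))⁻¹ * ((Real.sqrt 2 : ℂ))⁻¹ = (2 : ℂ)⁻¹ := by
    rw [← mul_inv, ← Complex.ofReal_mul, Real.mul_self_sqrt (by norm_num)]
    norm_num
  have h1' : (1 : Matrix (Fin 2) (Fin 2) ℂ) - P0mat = !![0, 0; 0, 1] := by
    unfold P0mat
    rw [Matrix.one_fin_two]
    ext i j
    fin_cases i <;> fin_cases j <;> simp
  have hQ : Hmat * P0mat * Hmat = (2 : ℂ)⁻¹ • !![1, 1; 1, 1] := by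
    unfold Hmat P0mat
    rw [smul_mul_assoc, smul_mul_assoc, mul_smul_comm, smul_smul, hc]
    congr 1
    norm_num [Matrix.mul_fin_two]
  have hQ' : Hmat * ((1 : Matrix (Fin 2) (Fin 2) ℂ) - P0mat) * Hmat
      = (2 : ℂ)⁻¹ • !![1, -1; -1, 1] := by
    rw [h1']
    unfold Hmat
    rw [smul_mul_assoc, smul_mul_assoc, mul_smul_comm, smul_smul, hc]
    congr 1
    norm_num [Matrix.mul_fin_two]
  have hU : (Hmat ⊗ₖ (1 : Matrix N N ℂ)) *
        (P0mat ⊗ₖ (1 : Matrix N N ℂ) + ((1 : Matrix (Fin 2) (Fin 2) ℂ) - P0mat) ⊗ₖ V) *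
        (Hmat ⊗ₖ (1 : Matrix N N ℂ))
      = ((2 : ℂ)⁻¹ • !![1, 1; 1, 1]) ⊗ₖ (1 : Matrix N N ℂ)
        + ((2 : ℂ)⁻¹ • !![1, -1; -1, 1]) ⊗ₖ V := by
    simp only [mul_add, add_mul, ← Matrix.mul_kronecker_mul, Matrix.one_mul, Matrix.mul_one]
    rw [hQ, hQ']
  rw [hU]
  have hQH : (((2 : ℂ)⁻¹ • !![1, 1; 1, 1] : Matrix (Fin 2) (Fin 2) ℂ))ᴴ
      = (2 : ℂ)⁻¹ • !![1, 1; 1, 1] := by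
    rw [Matrix.conjTranspose_smul]
    congr 1
    · simp
    · ext i j; fin_cases i <;> fin_cases j <;> simp
  have hQ'H : (((2 : ℂ)⁻¹ • !![1, -1; -1, 1] : Matrix (Fin 2) (Fin 2) ℂ))ᴴ
      = (2 : ℂ)⁻¹ • !![1, -1; -1, 1] := by
    rw [Matrix.conjTranspose_smul]
    congr 1
    · simp
    · ext i j; fin_cases i <;> fin_cases j <;> simp
  rw [Matrix.conjTranspose_add, kron_conjT, kron_conjT, hQH, hQ'H, Matrix.conjTranspose_one]
  simp only [mul_add, add_mul, ← Matrix.mul_kronecker_mul, Matrix.one_mul, Matrix.mul_one,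
    Matrix.trace_add, Matrix.trace_kronecker]
  rw [h1, h2, h3, h4]
  have e1 : (P0mat * ((2:ℂ)⁻¹ • !![1,1;1,1]) * P0mat * ((2:ℂ)⁻¹ • !![1,1;1,1])).trace
      = (4 : ℂ)⁻¹ := by
    unfold P0mat
    simp only [Matrix.mul_smul, Matrix.smul_mul, Matrix.trace_smul, smul_eq_mul, smul_smul]
    norm_num [Matrix.mul_fin_two, Matrix.trace_fin_two_of]
    simp [Matrix.trace_fin_two, Matrix.of_apply]
  have e2 : (P0mat * ((2:ℂ)⁻¹ • !![1,1;1,1]) * P0mat * ((2:ℂ)⁻¹ • !![1,-1;-1,1])).trace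
      = (4 : ℂ)⁻¹ := by
    unfold P0mat
    simp only [Matrix.mul_smul, Matrix.smul_mul, Matrix.trace_smul, smul_eq_mul, smul_smul]
    norm_num [Matrix.mul_fin_two, Matrix.trace_fin_two_of]
    simp [Matrix.trace_fin_two, Matrix.of_apply]
  have e3 : (P0mat * ((2:ℂ)⁻¹ • !![1,-1;-1,1]) * P0mat * ((2:ℂ)⁻¹ • !![1,1;1,1])).trace
      = (4 : ℂ)⁻¹ := by
    unfold P0mat
    simp only [Matrix.mul_smul, Matrix.smul_mul, Matrix.trace_smul, smul_eq_mul, smul_smul]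
    norm_num [Matrix.mul_fin_two, Matrix.trace_fin_two_of]
    simp [Matrix.trace_fin_two, Matrix.of_apply]
  have e4 : (P0mat * ((2:ℂ)⁻¹ • !![1,-1;-1,1]) * P0mat * ((2:ℂ)⁻¹ • !![1,-1;-1,1])).trace
      = (4 : ℂ)⁻¹ := by
    unfold P0mat
    simp only [Matrix.mul_smul, Matrix.smul_mul, Matrix.trace_smul, smul_eq_mul, smul_smul]
    norm_num [Matrix.mul_fin_two, Matrix.trace_fin_two_of]
    simp [Matrix.trace_fin_two, Matrix.of_apply]
  rw [e1, e2, e3, e4]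
  ring

/-- paper's Theorem 1: the Hadamard test of the controlled product
`V = (σ ⊗ Id^{⊗(n-1)}) S_n` applied to `n` copies of the noisy state `ρ` yields
ancilla-0 probability `Tr[(P₀ ⊗ Id) U (P₀ ⊗ ρ^{⊗n}) U†] = 1/2 + (1/2)·Tr[ρ^n σ]`. -/
theorem derangement_hadamard_test_prob {n d : ℕ} [NeZero n] (hn : 2 ≤ n)
    (ρ : Matrix (Fin d) (Fin d) ℂ) (hρ : ρ.PosSemidef) (htr : ρ.trace = 1)
    (σ : Matrix (Fin d) (Fin d) ℂ) (hσherm : σ.IsHermitian) (hσunit : σ * σᴴ = 1) :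
    let V : Matrix (Fin n → Fin d) (Fin n → Fin d) ℂ :=
      tensPow (fun μ : Fin n => if (μ : ℕ) = 0 then σ else 1) * cyclicShift d n
    let H : Matrix (Fin 2) (Fin 2) ℂ := (Real.sqrt 2 : ℂ)⁻¹ • !![1, 1; 1, -1]
    let P0 : Matrix (Fin 2) (Fin 2) ℂ := !![1, 0; 0, 0]
    let U : Matrix (Fin 2 × (Fin n → Fin d)) (Fin 2 × (Fin n → Fin d)) ℂ :=
      (H ⊗ₖ (1 : Matrix (Fin n → Fin d) (Fin n → Fin d) ℂ)) *
        (P0 ⊗ₖ (1 : Matrix (Fin n → Fin d) (Fin n → Fin d) ℂ) +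
          ((1 : Matrix (Fin 2) (Fin 2) ℂ) - P0) ⊗ₖ V) *
        (H ⊗ₖ (1 : Matrix (Fin n → Fin d) (Fin n → Fin d) ℂ))
    ((P0 ⊗ₖ (1 : Matrix (Fin n → Fin d) (Fin n → Fin d) ℂ)) * U *
        (P0 ⊗ₖ tensPow (fun _ : Fin n => ρ)) * Uᴴ).trace
      = 1 / 2 + (1 / 2) * (ρ ^ n * σ).trace := by
  obtain ⟨m, rfl⟩ : ∃ m, n = m + 2 := ⟨n - 2, by omega⟩
  intro V H P0 U
  set T : Matrix (Fin (m + 2) → Fin d) (Fin (m + 2) → Fin d) ℂ :=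
    tensPow (fun μ : Fin (m + 2) => if (μ : ℕ) = 0 then σ else 1) with hTdef
  have hV : V = T * cyclicShift d (m + 2) := rfl
  set R : Matrix (Fin (m + 2) → Fin d) (Fin (m + 2) → Fin d) ℂ :=
    tensPow (fun _ : Fin (m + 2) => ρ) with hRdef
  have hRtr : R.trace = 1 := by
    rw [hRdef, tensPow_trace]
    simp [htr]
  have hRH : Rᴴ = R := by
    rw [hRdef, tensPow_conjTranspose]
    exact congrArg tensPow (funext fun _ => hρ.1)
  have hVR : (V * R).trace = (ρ ^ (m + 2) * σ).trace := by
    rw [hV, hRdef, hTdef]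
    rw [mul_assoc, cyclicShift_comm, ← mul_assoc, tensPow_mul]
    have hfun : (fun μ : Fin (m + 2) => (if (μ : ℕ) = 0 then σ else 1) * ρ)
        = fun μ : Fin (m + 2) => if (μ : ℕ) = 0 then σ * ρ else ρ := by
      funext μ; split_ifs <;> simp
    rw [hfun, cyc_trace]
    rw [← mul_assoc, Matrix.trace_mul_comm, ← mul_assoc, ← pow_succ']
  have hRVt : (R * Vᴴ).trace = (ρ ^ (m + 2) * σ).trace := by
    have hconj : R * Vᴴ = (V * R)ᴴ := by conv_rhs => rw [Matrix.conjTranspose_mul, hRH]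
    rw [hconj, Matrix.trace_conjTranspose, hVR, ← Matrix.trace_conjTranspose,
      Matrix.conjTranspose_mul, hσherm.eq, (hρ.1.pow (m + 2)).eq, Matrix.trace_mul_comm]
  have hσσ : σᴴ * σ = 1 := by
    rw [hσherm.eq] at hσunit ⊢
    exact hσunit
  have hTT : Tᴴ * T = 1 := by
    rw [hTdef, tensPow_conjTranspose, tensPow_mul]
    have hfun : (fun μ : Fin (m + 2) =>
          (if (μ : ℕ) = 0 then σ else 1)ᴴ * (if (μ : ℕ) = 0 then σ else 1))
        = fun _ : Fin (m + 2) => (1 : Matrix (Fin d) (Fin d) ℂ) := by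
      funext μ
      by_cases h : (μ : ℕ) = 0 <;> simp [h, hσσ]
    rw [hfun, tensPow_one]
  have hVV : Vᴴ * V = 1 := by
    rw [hV, Matrix.conjTranspose_mul, mul_assoc,
      ← mul_assoc Tᴴ T (cyclicShift d (m + 2)), hTT, one_mul, cyclicShift_unitary]
  have hVRV : (V * R * Vᴴ).trace = 1 := by
    rw [Matrix.trace_mul_comm, ← mul_assoc, hVV, one_mul, hRtr]
  exact core V R _ hRtr hVR hRVt hVRV
end

section
/- Let (ψ, ψ_2, …, ψ_K) be an orthonormal family of vectors in ℂ^d, let λ ∈ (0,1], and let p_2, …, p_K be nonnegative reals with ∑_k p_k = 1. Define ρ = λ·|ψ⟩⟨ψ| + (1−λ)·∑_{k=2}^K p_k·|ψ_k⟩⟨ψ_k|, and let σ be a d×d complex matrix whose operator norm satisfies ‖σ‖ ≤ 1. Then for every n ≥ 1: |Tr[ρ^n σ]/λ^n − ⟨ψ, σψ⟩| ≤ Q_n, where Q_n := ((1−λ)/λ)^n · ∑_{k=2}^K p_k^n. -/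
/-! The vectors ψ, ψ_k are orthonormal, so the rank-one projections onto them are orthogonal
idempotents and, for `n ≥ 1`, `ρ ^ n = λ^n |ψ⟩⟨ψ| + ∑ₖ ((1 - λ) pₖ)^n |ψₖ⟩⟨ψₖ|`. Hence
`Tr[ρ^n σ] / λ^n - ⟨ψ, σψ⟩ = ∑ₖ ((1 - λ) pₖ / λ)^n ⟨ψₖ, σψₖ⟩`, and every `|⟨ψₖ, σψₖ⟩| ≤ ‖σ‖ ≤ 1`. -/

open Matrix BigOperators

section OrthogonalIdempotents

variable {ι R A : Type*} [Fintype ι] [DecidableEq ι] [CommSemiring R] [Semiring A] [Algebra R A]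
  {P : ι → A}

theorem sum_smul_mul_sum_smul_of_orthogonal_idempotents
    (hP : ∀ i j, P i * P j = if i = j then P i else 0) (a b : ι → R) :
    (∑ i, a i • P i) * (∑ j, b j • P j) = ∑ i, (a i * b i) • P i := by
  simp_rw [Finset.sum_mul, Finset.mul_sum, smul_mul_smul_comm, hP, smul_ite, smul_zero,
    Finset.sum_ite_eq, Finset.mem_univ, if_true]

theorem sum_smul_pow_of_orthogonal_idempotents
    (hP : ∀ i j, P i * P j = if i = j then P i else 0) (c : ι → R) {n : ℕ} (hn : n ≠ 0) :
    (∑ i, c i • P i) ^ n = ∑ i, c i ^ n • P i := by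
  induction n with
  | zero => exact absurd rfl hn
  | succ n ih =>
    rcases eq_or_ne n 0 with rfl | hn'
    · simp
    · rw [pow_succ, ih hn', sum_smul_mul_sum_smul_of_orthogonal_idempotents hP]
      simp_rw [← pow_succ]

end OrthogonalIdempotents

section RankOne

variable {ι m R : Type*} [DecidableEq ι] [Fintype m] [CommSemiring R]

theorem trace_vecMulVec_mul (u w : m → R) (M : Matrix m m R) :
    (vecMulVec u w * M).trace = w ⬝ᵥ M *ᵥ u := by
  rw [vecMulVec_mul, trace_vecMulVec, dotProduct_comm, dotProduct_mulVec]

theorem vecMulVec_mul_vecMulVec_of_biorthogonal {u w : ι → m → R}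
    (h : ∀ i j, w i ⬝ᵥ u j = if i = j then 1 else 0) (i j : ι) :
    vecMulVec (u i) (w i) * vecMulVec (u j) (w j) =
      if i = j then vecMulVec (u i) (w i) else 0 := by
  rw [vecMulVec_mul_vecMulVec, h]
  split_ifs with hij
  · rw [hij, one_smul]
  · rw [zero_smul, vecMulVec_zero]

theorem trace_sum_smul_vecMulVec_pow_mul [Fintype ι] [DecidableEq m] {u w : ι → m → R}
    (h : ∀ i j, w i ⬝ᵥ u j = if i = j then 1 else 0) (c : ι → R) {n : ℕ} (hn : n ≠ 0)
    (M : Matrix m m R) :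
    ((∑ i, c i • vecMulVec (u i) (w i)) ^ n * M).trace = ∑ i, c i ^ n * (w i ⬝ᵥ M *ᵥ u i) := by
  rw [sum_smul_pow_of_orthogonal_idempotents (vecMulVec_mul_vecMulVec_of_biorthogonal h) c hn,
    Finset.sum_mul, trace_sum]
  simp_rw [smul_mul, trace_smul, trace_vecMulVec_mul, smul_eq_mul]

end RankOne

theorem norm_star_dotProduct_mulVec_le {𝕜 n : Type*} [RCLike 𝕜] [Fintype n] [DecidableEq n]
    (M : Matrix n n 𝕜) {v : n → 𝕜} (hv : star v ⬝ᵥ v = 1) :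
    ‖star v ⬝ᵥ M *ᵥ v‖ ≤ ‖toEuclideanCLM (𝕜 := 𝕜) M‖ := by
  set x := WithLp.toLp 2 v
  set T := toEuclideanCLM (𝕜 := 𝕜) M
  have hx : ‖x‖ ^ 2 = 1 := by
    rw [@norm_sq_eq_re_inner 𝕜, EuclideanSpace.inner_toLp_toLp, dotProduct_comm, hv, RCLike.one_re]
  have hinner : star v ⬝ᵥ M *ᵥ v = inner 𝕜 x (T x) := by
    rw [toEuclideanCLM_toLp, EuclideanSpace.inner_toLp_toLp, dotProduct_comm]
  calc ‖star v ⬝ᵥ M *ᵥ v‖ = ‖inner 𝕜 x (T x)‖ := by rw [hinner]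
    _ ≤ ‖x‖ * ‖T x‖ := norm_inner_le_norm x (T x)
    _ ≤ ‖x‖ * (‖T‖ * ‖x‖) := by gcongr; exact T.le_opNorm x
    _ = ‖T‖ := by rw [mul_left_comm, ← sq, hx, mul_one]

theorem orthonormal_option_elim {ι n 𝕜 : Type*} [Fintype n] [CommSemiring 𝕜] [StarRing 𝕜]
    [DecidableEq ι]
    {ψ : n → 𝕜} {ψe : ι → n → 𝕜} (hψ : star ψ ⬝ᵥ ψ = 1) (horth : ∀ k, star ψ ⬝ᵥ ψe k = 0)
    (he : ∀ k l, star (ψe k) ⬝ᵥ ψe l = if k = l then 1 else 0) (i j : Option ι) :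
    star (i.elim ψ ψe) ⬝ᵥ j.elim ψ ψe = if i = j then 1 else 0 := by
  rcases i with _ | k <;> rcases j with _ | l
  · simpa using hψ
  · simpa using horth l
  · simp only [Option.elim, reduceCtorEq, if_false]
    rw [star_dotProduct, horth k, star_zero]
  · simpa using he k l

theorem methodB_error_bound_general {d K : ℕ}
    (ψ : Fin d → ℂ) (ψe : Fin K → Fin d → ℂ)
    (hψ : star ψ ⬝ᵥ ψ = 1)
    (horth : ∀ k, star ψ ⬝ᵥ ψe k = 0)
    (he : ∀ k l, star (ψe k) ⬝ᵥ ψe l = if k = l then 1 else 0)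
    (lam : ℝ) (hlam : lam ∈ Set.Ioc (0 : ℝ) 1)
    (p : Fin K → ℝ) (hp : ∀ k, 0 ≤ p k)
    (σ : Matrix (Fin d) (Fin d) ℂ)
    (hσ : ‖Matrix.toEuclideanCLM (𝕜 := ℂ) σ‖ ≤ 1)
    (n : ℕ) (hn : 1 ≤ n) :
    let ρ : Matrix (Fin d) (Fin d) ℂ :=
      (lam : ℂ) • vecMulVec ψ (star ψ) +
        ((1 : ℂ) - (lam : ℂ)) • ∑ k, (p k : ℂ) • vecMulVec (ψe k) (star (ψe k))
    ‖(ρ ^ n * σ).trace / (lam : ℂ) ^ n - star ψ ⬝ᵥ σ.mulVec ψ‖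
      ≤ ((1 - lam) / lam) ^ n * ∑ k, p k ^ n := by
  intro ρ
  obtain ⟨hlam0, hlam1⟩ := hlam
  let v : Option (Fin K) → Fin d → ℂ := fun i => i.elim ψ ψe
  let c : Option (Fin K) → ℂ := fun i => i.elim lam fun k => (1 - lam) * p k
  have hρ : ρ = ∑ i, c i • vecMulVec (v i) (star (v i)) := by
    simp only [ρ, Fintype.sum_option, Finset.smul_sum, smul_smul, c, v, Option.elim]
  have hdiff : (ρ ^ n * σ).trace / (lam : ℂ) ^ n - star ψ ⬝ᵥ σ *ᵥ ψ =
      ∑ k, (((1 - lam) * p k / lam : ℝ) : ℂ) ^ n * (star (ψe k) ⬝ᵥ σ *ᵥ ψe k) := by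
    rw [hρ, trace_sum_smul_vecMulVec_pow_mul (orthonormal_option_elim hψ horth he) c
      (Nat.one_le_iff_ne_zero.mp hn), Fintype.sum_option]
    have hlam_ne : (lam : ℂ) ≠ 0 := by exact_mod_cast hlam0.ne'
    simp only [c, Option.elim]
    rw [add_div, mul_div_cancel_left₀ _ (pow_ne_zero n hlam_ne), add_sub_cancel_left,
      Finset.sum_div]
    refine Finset.sum_congr rfl fun k _ => ?_
    push_cast
    rw [div_pow, div_mul_eq_mul_div]
  have hterm : ∀ k, ‖(((1 - lam) * p k / lam : ℝ) : ℂ) ^ n * (star (ψe k) ⬝ᵥ σ *ᵥ ψe k)‖ ≤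
      ((1 - lam) / lam) ^ n * p k ^ n := by
    intro k
    have hr : 0 ≤ (1 - lam) * p k / lam :=
      div_nonneg (mul_nonneg (sub_nonneg.mpr hlam1) (hp k)) hlam0.le
    rw [norm_mul, norm_pow, Complex.norm_real, Real.norm_of_nonneg hr, ← mul_pow,
      div_mul_eq_mul_div]
    refine mul_le_of_le_one_right (by positivity) ?_
    exact (norm_star_dotProduct_mulVec_le σ (by simpa using he k k)).trans hσ
  rw [hdiff, Finset.mul_sum]
  exact norm_sum_le_of_le _ fun k _ => hterm k

/-- Method B error bound, paper's Theorem 2: for the noisy state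
`ρ = λ|ψ⟩⟨ψ| + (1−λ)∑_k p_k |ψ_k⟩⟨ψ_k|` with `(ψ, ψ_2, …, ψ_K)` orthonormal,
`λ ∈ (0,1]`, `p_k ≥ 0`, `∑_k p_k = 1`, and `σ` with operator norm `‖σ‖ ≤ 1`:
`|Tr[ρ^n σ]/λ^n − ⟨ψ, σψ⟩| ≤ Q_n`, where `Q_n = ((1−λ)/λ)^n ∑_k p_k^n`. -/
theorem methodB_error_bound {d K : ℕ}
    (ψ : Fin d → ℂ) (ψe : Fin K → Fin d → ℂ)
    (hψ : star ψ ⬝ᵥ ψ = 1)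
    (horth : ∀ k, star ψ ⬝ᵥ ψe k = 0)
    (he : ∀ k l, star (ψe k) ⬝ᵥ ψe l = if k = l then 1 else 0)
    (lam : ℝ) (hlam : lam ∈ Set.Ioc (0 : ℝ) 1)
    (p : Fin K → ℝ) (hp : ∀ k, 0 ≤ p k) (hsum : ∑ k, p k = 1)
    (σ : Matrix (Fin d) (Fin d) ℂ)
    (hσ : ‖Matrix.toEuclideanCLM (𝕜 := ℂ) σ‖ ≤ 1)
    (n : ℕ) (hn : 1 ≤ n) :
    let ρ : Matrix (Fin d) (Fin d) ℂ :=
      (lam : ℂ) • vecMulVec ψ (star ψ) +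
        ((1 : ℂ) - (lam : ℂ)) • ∑ k, (p k : ℂ) • vecMulVec (ψe k) (star (ψe k))
    ‖(ρ ^ n * σ).trace / (lam : ℂ) ^ n - star ψ ⬝ᵥ σ.mulVec ψ‖
      ≤ ((1 - lam) / lam) ^ n * ∑ k, p k ^ n :=
  methodB_error_bound_general ψ ψe hψ horth he lam hlam p hp σ hσ n hn
end

section
/- Let ν ≥ 1 and d ≥ 1, for k = 1, …, ν let Φ_k and E_k be linear maps from d×d complex matrices to d×d complex matrices, and let ρ and H be d×d complex matrices. Then there exist coefficients c_0, c_1, …, c_ν ∈ ℂ such that for every ε: Tr[ H · (((1−ε)Φ_ν + εE_ν) ∘ ⋯ ∘ ((1−ε)Φ_1 + εE_1))(ρ) ] = ∑_{k=0}^ν c_k·ε^k, i.e. the expectation value is a polynomial of degree at most ν in ε, and its constant term is c_0 = Tr[H·(Φ_ν ∘ ⋯ ∘ Φ_1)(ρ)], the ideal error-free expectation value. -/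
open Matrix BigOperators

lemma key {M : Type*} [AddCommGroup M] [Module ℂ M] (n : ℕ)
    (Φ E : Fin n → Module.End ℂ M) :
    ∃ a : ℕ → Module.End ℂ M,
      a 0 = (List.ofFn Φ).prod ∧ (∀ k, n < k → a k = 0) ∧
      ∀ ε : ℂ, (List.ofFn fun k => (1 - ε) • Φ k + ε • E k).prod
        = ∑ k ∈ Finset.range (n + 1), ε ^ k • a k := by
  induction n with
  | zero =>
    refine ⟨fun k => if k = 0 then 1 else 0, by simp, ?_, fun ε => by simp⟩
    intro k hk
    simp only [if_neg (by omega : k ≠ 0)]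
  | succ n ih =>
    obtain ⟨a, ha0, haz, ha⟩ := ih (fun k => Φ k.succ) (fun k => E k.succ)
    set b : ℕ → Module.End ℂ M := fun k =>
      Φ 0 * a k + (E 0 - Φ 0) * (if k = 0 then 0 else a (k - 1)) with hb
    refine ⟨b, ?_, ?_, ?_⟩
    · rw [List.ofFn_succ, List.prod_cons, hb]
      simp [ha0]
    · intro k hk
      have h1 : a k = 0 := haz _ (by omega)
      have h2 : a (k - 1) = 0 := haz _ (by omega)
      simp [hb, h1, h2]
    · intro ε
      rw [List.ofFn_succ, List.prod_cons]
      have hS : (List.ofFn fun k : Fin n => (1 - ε) • Φ k.succ + ε • E k.succ).prod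
          = ∑ k ∈ Finset.range (n + 1), ε ^ k • a k := ha ε
      have hhead : (1 - ε) • Φ 0 + ε • E 0 = Φ 0 + ε • (E 0 - Φ 0) := by
        rw [sub_smul, one_smul, smul_sub]; abel
      have lhs_eq : ((1 - ε) • Φ 0 + ε • E 0) *
            (List.ofFn fun k : Fin n =>
              (1 - ε) • Φ (Fin.succ k) + ε • E (Fin.succ k)).prod
          = (∑ k ∈ Finset.range (n + 1), ε ^ k • (Φ 0 * a k))
            + ∑ k ∈ Finset.range (n + 1), ε ^ (k + 1) • ((E 0 - Φ 0) * a k) := by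
        rw [hS, hhead, add_mul, smul_mul_assoc, Finset.mul_sum, Finset.mul_sum,
          Finset.smul_sum]
        congr 1
        · exact Finset.sum_congr rfl fun k _ => (mul_smul_comm _ _ _)
        · exact Finset.sum_congr rfl fun k _ => by
            rw [mul_smul_comm, smul_smul, pow_succ']
      rw [lhs_eq]
      conv_rhs => rw [Finset.sum_range_succ']
      simp only [hb, if_neg (Nat.succ_ne_zero _), Nat.add_sub_cancel, if_pos rfl,
        pow_zero, one_smul, mul_zero, add_zero, smul_add]
      rw [Finset.sum_add_distrib]
      rw [Finset.sum_range_succ' (f := fun k => ε ^ k • (Φ 0 * a k)),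
        Finset.sum_range_succ (f := fun k => ε ^ (k + 1) • (Φ 0 * a (k + 1))),
        haz (n + 1) (by omega)]
      simp only [mul_zero, smul_zero, add_zero, pow_zero, one_smul]
      simp only [if_true, mul_zero, add_zero]
      abel

/-- polynomial dependence of expectation values on the gate error rate:
for linear maps `Φ_k, E_k` on `d × d` matrices and matrices `ρ, H`, there exist
coefficients `c_0, …, c_ν` such that for every `ε`:
`Tr[H · (((1−ε)Φ_ν + εE_ν) ∘ ⋯ ∘ ((1−ε)Φ_1 + εE_1))(ρ)] = ∑_{k=0}^ν c_k ε^k`,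
with constant term `c_0 = Tr[H · (Φ_ν ∘ ⋯ ∘ Φ_1)(ρ)]` the ideal expectation value. -/
theorem expectation_polynomial_in_error_rate (ν d : ℕ) (hν : 1 ≤ ν) (hd : 1 ≤ d)
    (Φ E : Fin ν → Module.End ℂ (Matrix (Fin d) (Fin d) ℂ))
    (ρ H : Matrix (Fin d) (Fin d) ℂ) :
    ∃ c : Fin (ν + 1) → ℂ,
      c 0 = (H * ((List.ofFn Φ).prod ρ)).trace ∧
      ∀ ε : ℂ,
        (H * ((List.ofFn fun k => (1 - ε) • Φ k + ε • E k).prod ρ)).trace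
          = ∑ k : Fin (ν + 1), c k * ε ^ (k : ℕ) := by
  obtain ⟨a, ha0, -, ha⟩ := key ν Φ E
  refine ⟨fun k => (H * (a (k : ℕ) ρ)).trace, by simp only [Fin.val_zero, ha0], fun ε => ?_⟩
  rw [ha ε, Fin.sum_univ_eq_sum_range (fun k => (H * (a k ρ)).trace * ε ^ k)]
  rw [LinearMap.sum_apply, Finset.mul_sum, trace_sum]
  refine Finset.sum_congr rfl fun k _ => ?_
  rw [LinearMap.smul_apply, Matrix.mul_smul, trace_smul, smul_eq_mul, mul_comm]
end
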